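/- Let a ∈ ℝ ∪ {−∞} and let φ : (a,∞) → ℝ be smooth with φ'(t) > 0 and φ''(t) ≥ 0 for all t. Let (x, z, θ) : [0, s₋) → (0,∞) × (a,∞) × ℝ be the maximal solution of the profile-curve system x'(s) = cos θ(s), z'(s) = sin θ(s), θ'(s) = φ'(z(s))·cos θ(s) − sin θ(s)/x(s), with initial conditions x(0) = x₀ > 0, z(0) = z₀ ∈ (a,∞), θ(0) = π. Then there exists s₀ ∈ (0, s₋) such that θ(s₀) = π/2. -/

import Mathlib

/-!
Suppose `θ` never returns to `π/2`. The quantity `x sin θ` has derivative `x φ'(z) cos² θ ≥ 0`,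
so it stays `≥ 0`; since `θ` starts at `π` and avoids `π/2`, this traps `θ` in `(π/2, π]`.
There `x` decreases and `z` increases, so with `c = min (φ'(z₀)) (1/x₀)` one gets
`θ' ≤ c cos θ - c sin θ ≤ -c`, hence `θ(s) ≤ π - c s` and the lifetime `s₋` is finite.
Then `x`, `z`, `θ` are monotone and bounded, so they converge as `s → s₋`, and the limit of `x`
is positive because `x ≥ x sin θ`, which is bounded below by its positive value at any earlier
time. Picard–Lindelöf at the limit point continues the solution past `s₋`, contradicting
maximality.
-/

open Set Filter
open scoped ENNReal

/-- The interval `[0, ω)` (all of `[0,∞)` when `ω = ∞`). -/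
def Dom (ω : ℝ≥0∞) : Set ℝ := {s : ℝ | 0 ≤ s ∧ ENNReal.ofReal s < ω}

open Real Topology

lemma dom_ofReal (r : ℝ) : Dom (ENNReal.ofReal r) = Ico 0 r := by
  ext s
  simp only [Dom, mem_ofPred_eq, mem_Ico, and_congr_right_iff]
  intro hs
  rw [ENNReal.ofReal_lt_ofReal_iff']
  exact ⟨fun h => h.1, fun h => ⟨h, hs.trans_lt h⟩⟩

lemma ordConnected_dom (ω : ℝ≥0∞) : (Dom ω).OrdConnected :=
  ⟨fun _ hs _ ht _ hu => ⟨hs.1.trans hu.1, (ENNReal.ofReal_le_ofReal hu.2).trans_lt ht.2⟩⟩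

lemma exists_eq_ofReal_of_dom_bddAbove {ω : ℝ≥0∞} (hω : 0 < ω) {T : ℝ}
    (hT : ∀ s ∈ Dom ω, s ≤ T) : ∃ r, 0 < r ∧ ω = ENNReal.ofReal r := by
  have hω_top : ω ≠ ⊤ := by
    rintro rfl
    have := hT (max T 0 + 1) ⟨by positivity, ENNReal.ofReal_lt_top⟩
    linarith [le_max_left T 0]
  exact ⟨ω.toReal, ENNReal.toReal_pos hω.ne' hω_top, (ENNReal.ofReal_toReal hω_top).symm⟩

lemma isOpen_setOf_lt_coe (a : EReal) : IsOpen {t : ℝ | a < (t : EReal)} :=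
  isOpen_Ioi.preimage continuous_coe_real_ereal

lemma ordConnected_setOf_lt_coe (a : EReal) : {t : ℝ | a < (t : EReal)}.OrdConnected :=
  ⟨fun _ hs _ _ _ hu => hs.trans_le (EReal.coe_le_coe_iff.2 hu.1)⟩

namespace Set.OrdConnected

variable {D : Set ℝ} {f f' : ℝ → ℝ}

lemma monotoneOn_of_hasDerivWithinAt_nonneg (hD : D.OrdConnected)
    (hf : ∀ s ∈ D, HasDerivWithinAt f (f' s) D s) (hf' : ∀ s ∈ D, 0 ≤ f' s) :
    MonotoneOn f D :=
  _root_.monotoneOn_of_hasDerivWithinAt_nonneg hD.convex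
    (fun s hs => (hf s hs).continuousWithinAt)
    (fun s hs => (hf s (interior_subset hs)).mono interior_subset)
    (fun s hs => hf' s (interior_subset hs))

lemma antitoneOn_of_hasDerivWithinAt_nonpos (hD : D.OrdConnected)
    (hf : ∀ s ∈ D, HasDerivWithinAt f (f' s) D s) (hf' : ∀ s ∈ D, f' s ≤ 0) :
    AntitoneOn f D :=
  _root_.antitoneOn_of_hasDerivWithinAt_nonpos hD.convex
    (fun s hs => (hf s hs).continuousWithinAt)
    (fun s hs => (hf s (interior_subset hs)).mono interior_subset)
    (fun s hs => hf' s (interior_subset hs))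

end Set.OrdConnected

theorem exists_extension_of_tendsto {E : Type*} [NormedAddCommGroup E] [NormedSpace ℝ E]
    [CompleteSpace E] {F : E → E} {V : ℝ → E} {p : E} {t₀ r : ℝ} (htr : t₀ < r)
    (hV : ∀ s ∈ Ico t₀ r, HasDerivWithinAt V (F (V s)) (Ico t₀ r) s)
    (hVp : Tendsto V (𝓝[<] r) (𝓝 p)) (hF : ContDiffAt ℝ 1 F p) {W : Set E} (hW : W ∈ 𝓝 p) :
    ∃ b > r, ∃ G : ℝ → E, EqOn G V (Ico t₀ r) ∧ MapsTo G (Ico r b) W ∧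
      ∀ s ∈ Ico t₀ b, HasDerivWithinAt G (F (G s)) (Ico t₀ b) s := by
  obtain ⟨f, hfr, ε, hε, hf⟩ :=
    hF.exists_forall_mem_closedBall_exists_eq_forall_mem_Ioo_hasDerivAt₀ r
  have hr : r ∈ Ioo (r - ε) (r + ε) := ⟨by linarith, by linarith⟩
  have hfW : ∀ᶠ u in 𝓝[≥] r, u ∈ Ioo (r - ε) (r + ε) ∧ f u ∈ W :=
    nhdsWithin_le_nhds (Filter.Eventually.and (Ioo_mem_nhds hr.1 hr.2)
      ((hf r hr).continuousAt.preimage_mem_nhds (hfr ▸ hW)))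
  obtain ⟨b, hrb, hb⟩ := mem_nhdsGE_iff_exists_Ico_subset.1 hfW
  set G : ℝ → E := fun s => if s < r then V s else f s
  have hGV : EqOn G V (Iio r) := fun s hs => if_pos hs
  have hGf : EqOn G f (Ici r) := fun s hs => if_neg (not_lt.2 hs)
  have hVat : ∀ s ∈ Ioo t₀ r, HasDerivAt G (F (V s)) s := fun s hs =>
    ((hV s (Ioo_subset_Ico_self hs)).hasDerivAt (Ico_mem_nhds hs.1 hs.2)).congr_of_eventuallyEq
      (eventually_of_mem (Iio_mem_nhds hs.2) hGV)
  have hright : ∀ s ∈ Ico r b, HasDerivWithinAt G (F (G s)) (Ici r) s := fun s hs => by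
    rw [hGf hs.1]
    exact (hf s (hb hs).1).hasDerivWithinAt.congr hGf (hGf hs.1)
  refine ⟨b, hrb, G, fun s hs => hGV hs.2, fun s hs => hGf hs.1 ▸ (hb hs).2, fun s hs => ?_⟩
  rcases lt_trichotomy s r with hsr | rfl | hsr
  · rw [hGV hsr]
    refine ((hV s ⟨hs.1, hsr⟩).congr (fun u hu => hGV hu.2) (hGV hsr)).mono_of_mem_nhdsWithin ?_
    exact mem_nhdsWithin.2 ⟨Iio r, isOpen_Iio, hsr, fun u hu => ⟨hu.2.1, hu.1⟩⟩
  · -- at the junction the left derivative is `F p`, since `V' = F ∘ V → F p`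
    have hGs : G s = p := (hGf self_mem_Ici).trans hfr
    have hleft : HasDerivWithinAt G (F p) (Iic s) s := by
      refine hasDerivWithinAt_Iic_of_tendsto_deriv (s := Ioo t₀ s)
        (fun u hu => (hVat u hu).differentiableAt.differentiableWithinAt) ?_
        (Ioo_mem_nhdsLT htr) ?_
      · refine (hGs ▸ hVp.mono_left (nhdsWithin_mono _ Ioo_subset_Iio_self)).congr' ?_
        exact eventually_nhdsWithin_of_forall fun u hu => (hGV hu.2).symm
      · refine ((hF.continuousAt.tendsto.comp hVp)).congr' ?_
        filter_upwards [Ioo_mem_nhdsLT htr] with u hu using (hVat u hu).deriv.symm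
    have hright' := hright s ⟨le_rfl, hrb⟩
    rw [hGs] at hright' ⊢
    exact (hleft.union hright').mono fun u _ => le_total u s
  · exact ((hright s ⟨hsr.le, hs.2⟩).hasDerivAt (Ici_mem_nhds hsr)).hasDerivWithinAt

noncomputable def profileField (φ' : ℝ → ℝ) (p : ℝ × ℝ × ℝ) : ℝ × ℝ × ℝ :=
  (cos p.2.2, sin p.2.2, φ' p.2.1 * cos p.2.2 - sin p.2.2 / p.1)

lemma contDiffAt_profileField {φ' : ℝ → ℝ} {U : Set ℝ} (hU : IsOpen U)
    (hφ' : ContDiffOn ℝ 1 φ' U) {p : ℝ × ℝ × ℝ} (hp₁ : p.1 ≠ 0) (hp₂ : p.2.1 ∈ U) :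
    ContDiffAt ℝ 1 (profileField φ') p := by
  have hθ : ContDiff ℝ 1 (fun p : ℝ × ℝ × ℝ => p.2.2) := contDiff_snd.comp contDiff_snd
  have hz : ContDiffAt ℝ 1 (fun p : ℝ × ℝ × ℝ => φ' p.2.1) p :=
    (hφ'.contDiffAt (hU.mem_nhds hp₂)).comp p (contDiff_fst.comp contDiff_snd).contDiffAt
  have hcos := (contDiff_cos.comp hθ).contDiffAt (x := p)
  have hsin := (contDiff_sin.comp hθ).contDiffAt (x := p)
  exact hcos.prodMk (hsin.prodMk ((hz.mul hcos).sub (hsin.div contDiff_fst.contDiffAt hp₁)))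

structure IsProfileCurve (φ' : ℝ → ℝ) (U D : Set ℝ) (x z θ : ℝ → ℝ) : Prop where
  pos : ∀ s ∈ D, 0 < x s
  mem : ∀ s ∈ D, z s ∈ U
  hasDerivWithinAt_x : ∀ s ∈ D, HasDerivWithinAt x (cos (θ s)) D s
  hasDerivWithinAt_z : ∀ s ∈ D, HasDerivWithinAt z (sin (θ s)) D s
  hasDerivWithinAt_θ : ∀ s ∈ D,
    HasDerivWithinAt θ (φ' (z s) * cos (θ s) - sin (θ s) / x s) D s

namespace IsProfileCurve

variable {φ' : ℝ → ℝ} {U D : Set ℝ} {x z θ : ℝ → ℝ}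

lemma hasDerivWithinAt_prod (h : IsProfileCurve φ' U D x z θ) {s : ℝ} (hs : s ∈ D) :
    HasDerivWithinAt (fun s => (x s, z s, θ s)) (profileField φ' (x s, z s, θ s)) D s :=
  (h.hasDerivWithinAt_x s hs).prodMk
    ((h.hasDerivWithinAt_z s hs).prodMk (h.hasDerivWithinAt_θ s hs))

lemma of_hasDerivWithinAt_prod {G : ℝ → ℝ × ℝ × ℝ} (hpos : ∀ s ∈ D, 0 < (G s).1)
    (hmem : ∀ s ∈ D, (G s).2.1 ∈ U)
    (hG : ∀ s ∈ D, HasDerivWithinAt G (profileField φ' (G s)) D s) :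
    IsProfileCurve φ' U D (fun s => (G s).1) (fun s => (G s).2.1) (fun s => (G s).2.2) where
  pos := hpos
  mem := hmem
  hasDerivWithinAt_x s hs := by
    simpa [profileField] using (hG s hs).hasFDerivWithinAt.fst.hasDerivWithinAt
  hasDerivWithinAt_z s hs := by
    simpa [profileField] using (hG s hs).hasFDerivWithinAt.snd.fst.hasDerivWithinAt
  hasDerivWithinAt_θ s hs := by
    simpa [profileField] using (hG s hs).hasFDerivWithinAt.snd.snd.hasDerivWithinAt

lemma monotoneOn_mul_sin (h : IsProfileCurve φ' U D x z θ) (hD : D.OrdConnected)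
    (hφ' : ∀ t ∈ U, 0 ≤ φ' t) : MonotoneOn (fun s => x s * sin (θ s)) D := by
  refine hD.monotoneOn_of_hasDerivWithinAt_nonneg (fun s hs =>
    (h.hasDerivWithinAt_x s hs).mul ((hasDerivAt_sin _).comp_hasDerivWithinAt s
      (h.hasDerivWithinAt_θ s hs))) fun s hs => ?_
  have hx := h.pos s hs
  have hderiv : cos (θ s) * sin (θ s) +
      x s * (cos (θ s) * (φ' (z s) * cos (θ s) - sin (θ s) / x s)) =
      x s * φ' (z s) * cos (θ s) ^ 2 := by
    field_simp
    ring
  rw [hderiv]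
  have := hφ' _ (h.mem s hs)
  positivity

lemma angle_mem_Ioc (h : IsProfileCurve φ' U D x z θ) (hD : D.OrdConnected) (h0 : 0 ∈ D)
    (hD₀ : ∀ s ∈ D, 0 ≤ s) (hφ' : ∀ t ∈ U, 0 ≤ φ' t) (hθ₀ : θ 0 = π)
    (hne : ∀ s ∈ D, 0 < s → θ s ≠ π / 2) {s : ℝ} (hs : s ∈ D) : θ s ∈ Ioc (π / 2) π := by
  have hθD : IsPreconnected (θ '' D) := hD.isPreconnected.image θ
    fun s hs => (h.hasDerivWithinAt_θ s hs).continuousWithinAt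
  have hπ : π ∈ θ '' D := ⟨0, h0, hθ₀⟩
  constructor
  · by_contra! hle
    obtain ⟨u, hu, hθu⟩ := hθD.Icc_subset (mem_image_of_mem θ hs) hπ ⟨hle, by linarith [pi_pos]⟩
    have hu0 : u ≠ 0 := by rintro rfl; linarith [pi_pos]
    exact hne u hu ((hD₀ u hu).lt_of_ne' hu0) hθu
  · by_contra! hlt
    obtain ⟨u, hu, hθu⟩ := hθD.Icc_subset hπ (mem_image_of_mem θ hs)
      (show min (θ s) (3 * π / 2) ∈ Icc π (θ s) from
        ⟨le_min hlt.le (by linarith [pi_pos]), min_le_left _ _⟩)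
    have hsin : sin (θ u) < 0 := by
      rw [hθu, ← sin_sub_two_pi]
      exact sin_neg_of_neg_of_neg_pi_lt (by linarith [min_le_right (θ s) (3 * π / 2), pi_pos])
        (by linarith [lt_min hlt (by linarith [pi_pos] : π < 3 * π / 2)])
    have hflux := h.monotoneOn_mul_sin hD hφ' h0 hu (hD₀ u hu)
    simp only [hθ₀, sin_pi, mul_zero] at hflux
    nlinarith [h.pos u hu]

lemma antitoneOn_x (h : IsProfileCurve φ' U D x z θ) (hD : D.OrdConnected)
    (hθ : ∀ s ∈ D, θ s ∈ Icc (π / 2) π) : AntitoneOn x D :=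
  hD.antitoneOn_of_hasDerivWithinAt_nonpos h.hasDerivWithinAt_x fun s hs =>
    cos_nonpos_of_pi_div_two_le_of_le (hθ s hs).1 (by linarith [(hθ s hs).2, pi_pos])

lemma monotoneOn_z (h : IsProfileCurve φ' U D x z θ) (hD : D.OrdConnected)
    (hθ : ∀ s ∈ D, θ s ∈ Icc (π / 2) π) : MonotoneOn z D :=
  hD.monotoneOn_of_hasDerivWithinAt_nonneg h.hasDerivWithinAt_z fun s hs =>
    sin_nonneg_of_nonneg_of_le_pi (by linarith [(hθ s hs).1, pi_pos]) (hθ s hs).2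

lemma antitoneOn_z_sub_id (h : IsProfileCurve φ' U D x z θ) (hD : D.OrdConnected) :
    AntitoneOn (fun s => z s - s) D :=
  hD.antitoneOn_of_hasDerivWithinAt_nonpos
    (fun s hs => (h.hasDerivWithinAt_z s hs).sub (hasDerivWithinAt_id s D))
    fun _ _ => sub_nonpos.2 (sin_le_one _)

lemma antitoneOn_angle_add_mul (h : IsProfileCurve φ' U D x z θ) (hD : D.OrdConnected)
    (hθ : ∀ s ∈ D, θ s ∈ Icc (π / 2) π) {c : ℝ} (hc : 0 ≤ c)
    (hcφ : ∀ s ∈ D, c ≤ φ' (z s)) (hcx : ∀ s ∈ D, c * x s ≤ 1) :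
    AntitoneOn (fun s => θ s + c * s) D := by
  refine hD.antitoneOn_of_hasDerivWithinAt_nonpos
    (fun s hs => (h.hasDerivWithinAt_θ s hs).add ((hasDerivWithinAt_id s D).const_mul c))
    fun s hs => ?_
  obtain ⟨hθ₁, hθ₂⟩ := hθ s hs
  have hcos : cos (θ s) ≤ 0 := cos_nonpos_of_pi_div_two_le_of_le hθ₁ (by linarith [pi_pos])
  have hsin : 0 ≤ sin (θ s) := sin_nonneg_of_nonneg_of_le_pi (by linarith [pi_pos]) hθ₂
  have hsc : 1 ≤ sin (θ s) - cos (θ s) := by nlinarith [sin_sq_add_cos_sq (θ s)]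
  have hx := h.pos s hs
  have hφ : φ' (z s) * cos (θ s) ≤ c * cos (θ s) := mul_le_mul_of_nonpos_right (hcφ s hs) hcos
  have hdiv : c * sin (θ s) ≤ sin (θ s) / x s := by
    rw [le_div_iff₀ hx]
    nlinarith [hcx s hs]
  simp only [mul_one]
  nlinarith

lemma exists_pos_antitoneOn_angle_add_mul (h : IsProfileCurve φ' U D x z θ)
    (hD : D.OrdConnected) (hθ : ∀ s ∈ D, θ s ∈ Icc (π / 2) π) (h0 : 0 ∈ D)
    (hD₀ : ∀ s ∈ D, 0 ≤ s) (hφ'U : MonotoneOn φ' U) (hφ'0 : 0 < φ' (z 0)) :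
    ∃ c > 0, AntitoneOn (fun s => θ s + c * s) D := by
  have hx0 := h.pos 0 h0
  refine ⟨min (φ' (z 0)) (x 0)⁻¹, lt_min hφ'0 (inv_pos.2 hx0),
    h.antitoneOn_angle_add_mul hD hθ (lt_min hφ'0 (inv_pos.2 hx0)).le (fun s hs => ?_)
      fun s hs => ?_⟩
  · exact (min_le_left _ _).trans (hφ'U (h.mem 0 h0) (h.mem s hs)
      (h.monotoneOn_z hD hθ h0 hs (hD₀ s hs)))
  · calc min (φ' (z 0)) (x 0)⁻¹ * x s ≤ (x 0)⁻¹ * x 0 :=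
          mul_le_mul (min_le_right _ _) (h.antitoneOn_x hD hθ h0 hs (hD₀ s hs))
            (h.pos s hs).le (inv_pos.2 hx0).le
      _ = 1 := inv_mul_cancel₀ hx0.ne'

lemma exists_tendsto_nhdsLT {r : ℝ} (h : IsProfileCurve φ' U (Ico 0 r) x z θ) (hr : 0 < r)
    (hφ' : ∀ t ∈ U, 0 ≤ φ' t) (hθ : ∀ s ∈ Ico 0 r, θ s ∈ Icc (π / 2) π) {c : ℝ} (hc : 0 < c)
    (hθc : AntitoneOn (fun s => θ s + c * s) (Ico 0 r)) :
    ∃ p : ℝ × ℝ × ℝ, 0 < p.1 ∧ z 0 ≤ p.2.1 ∧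
      Tendsto (fun s => (x s, z s, θ s)) (𝓝[<] r) (𝓝 p) := by
  have hD : (Ico 0 r).OrdConnected := ordConnected_Ico
  have h0 : (0 : ℝ) ∈ Ico 0 r := ⟨le_rfl, hr⟩
  have hIoo : Ioo 0 r ⊆ Ico 0 r := Ioo_subset_Ico_self
  have hθa : AntitoneOn θ (Ico 0 r) := fun u hu v hv huv => by
    nlinarith [hθc hu hv huv]
  have hz := h.monotoneOn_z hD hθ
  have hxlim := ((h.antitoneOn_x hD hθ).mono hIoo).tendsto_nhdsWithin_Ioo_left
    (nonempty_Ioo.2 hr) ⟨0, by rintro _ ⟨s, hs, rfl⟩; exact (h.pos s (hIoo hs)).le⟩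
  have hzlim := (hz.mono hIoo).tendsto_nhdsWithin_Ioo_left (nonempty_Ioo.2 hr)
    ⟨z 0 + r, by
      rintro _ ⟨s, hs, rfl⟩
      linarith [h.antitoneOn_z_sub_id hD h0 (hIoo hs) hs.1.le, hs.2]⟩
  have hθlim := (hθa.mono hIoo).tendsto_nhdsWithin_Ioo_left (nonempty_Ioo.2 hr)
    ⟨π / 2, by rintro _ ⟨s, hs, rfl⟩; exact (hθ s (hIoo hs)).1⟩
  refine ⟨_, ?_, ?_, hxlim.prodMk_nhds (hzlim.prodMk_nhds hθlim)⟩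
  · have hδ : r / 2 ∈ Ico 0 r := ⟨by positivity, half_lt_self hr⟩
    have hθδ : θ (r / 2) < π := by
      have := hθc h0 hδ hδ.1
      linarith [(hθ 0 h0).2, mul_pos hc (half_pos hr)]
    have hℓ : 0 < x (r / 2) * sin (θ (r / 2)) :=
      mul_pos (h.pos _ hδ) (sin_pos_of_pos_of_lt_pi (by linarith [(hθ _ hδ).1, pi_pos]) hθδ)
    refine hℓ.trans_le (ge_of_tendsto hxlim ?_)
    filter_upwards [Ioo_mem_nhdsLT (half_lt_self hr)] with s hs
    have hs' : s ∈ Ico 0 r := ⟨hδ.1.trans hs.1.le, hs.2⟩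
    calc x (r / 2) * sin (θ (r / 2)) ≤ x s * sin (θ s) :=
          h.monotoneOn_mul_sin hD hφ' hδ hs' hs.1.le
      _ ≤ x s := mul_le_of_le_one_right (h.pos s hs').le (sin_le_one _)
  · refine ge_of_tendsto hzlim ?_
    filter_upwards [Ioo_mem_nhdsLT hr] with s hs using hz h0 (hIoo hs) hs.1.le

lemma exists_extension {r : ℝ} (h : IsProfileCurve φ' U (Ico 0 r) x z θ) (hr : 0 < r)
    (hU : IsOpen U) (hφ' : ContDiffOn ℝ 1 φ' U) {p : ℝ × ℝ × ℝ} (hp₁ : 0 < p.1)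
    (hp₂ : p.2.1 ∈ U) (hp : Tendsto (fun s => (x s, z s, θ s)) (𝓝[<] r) (𝓝 p)) :
    ∃ b > r, ∃ x' z' θ' : ℝ → ℝ, EqOn x' x (Ico 0 r) ∧ EqOn z' z (Ico 0 r) ∧
      EqOn θ' θ (Ico 0 r) ∧ IsProfileCurve φ' U (Ico 0 b) x' z' θ' := by
  set W : Set (ℝ × ℝ × ℝ) := {q | 0 < q.1 ∧ q.2.1 ∈ U}
  have hW : W ∈ 𝓝 p := ((isOpen_lt continuous_const continuous_fst).inter
    (hU.preimage (continuous_fst.comp continuous_snd))).mem_nhds ⟨hp₁, hp₂⟩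
  obtain ⟨b, hrb, G, hGV, hGW, hG⟩ := exists_extension_of_tendsto hr
    (fun s hs => h.hasDerivWithinAt_prod hs) hp
    (contDiffAt_profileField hU hφ' hp₁.ne' hp₂) hW
  have hGW' : MapsTo G (Ico 0 b) W := fun s hs => by
    rcases lt_or_ge s r with hsr | hsr
    · rw [hGV ⟨hs.1, hsr⟩]
      exact ⟨h.pos s ⟨hs.1, hsr⟩, h.mem s ⟨hs.1, hsr⟩⟩
    · exact hGW ⟨hsr, hs.2⟩
  exact ⟨b, hrb, _, _, _, fun s hs => congrArg (·.1) (hGV hs),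
    fun s hs => congrArg (·.2.1) (hGV hs), fun s hs => congrArg (·.2.2) (hGV hs),
    of_hasDerivWithinAt_prod (fun s hs => (hGW' hs).1) (fun s hs => (hGW' hs).2) hG⟩

end IsProfileCurve

theorem stmt_12 (a : EReal) (φ φ' φ'' : ℝ → ℝ)
    (hφsm : ContDiffOn ℝ (⊤ : ℕ∞) φ {t : ℝ | a < (t : EReal)})
    (hφd : ∀ t : ℝ, a < (t : EReal) → HasDerivAt φ (φ' t) t)
    (hφd2 : ∀ t : ℝ, a < (t : EReal) → HasDerivAt φ' (φ'' t) t)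
    (hφ'pos : ∀ t : ℝ, a < (t : EReal) → 0 < φ' t)
    (hφ''nn : ∀ t : ℝ, a < (t : EReal) → 0 ≤ φ'' t)
    (x₀ z₀ : ℝ)
    (sm : ℝ≥0∞) (hsm : 0 < sm)
    (x z θ : ℝ → ℝ)
    (hx0 : x 0 = x₀) (hz0 : z 0 = z₀) (hθ0 : θ 0 = Real.pi)
    (hxpos : ∀ s ∈ Dom sm, 0 < x s)
    (hzmem : ∀ s ∈ Dom sm, a < (z s : EReal))
    (hdx : ∀ s ∈ Dom sm, HasDerivWithinAt x (Real.cos (θ s)) (Dom sm) s)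
    (hdz : ∀ s ∈ Dom sm, HasDerivWithinAt z (Real.sin (θ s)) (Dom sm) s)
    (hdθ : ∀ s ∈ Dom sm, HasDerivWithinAt θ
      (φ' (z s) * Real.cos (θ s) - Real.sin (θ s) / x s) (Dom sm) s)
    -- maximality: no solution with the same initial data on a larger interval
    (hmax : ∀ sm' : ℝ≥0∞, sm < sm' →
      ¬ ∃ x' z' θ' : ℝ → ℝ,
        x' 0 = x₀ ∧ z' 0 = z₀ ∧ θ' 0 = Real.pi ∧
        (∀ s ∈ Dom sm', 0 < x' s) ∧
        (∀ s ∈ Dom sm', a < (z' s : EReal)) ∧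
        (∀ s ∈ Dom sm', HasDerivWithinAt x' (Real.cos (θ' s)) (Dom sm') s) ∧
        (∀ s ∈ Dom sm', HasDerivWithinAt z' (Real.sin (θ' s)) (Dom sm') s) ∧
        (∀ s ∈ Dom sm', HasDerivWithinAt θ'
          (φ' (z' s) * Real.cos (θ' s) - Real.sin (θ' s) / x' s) (Dom sm') s)) :
    ∃ s₀ : ℝ, 0 < s₀ ∧ ENNReal.ofReal s₀ < sm ∧ θ s₀ = Real.pi / 2 := by
  by_contra! hne
  set U : Set ℝ := {t | a < (t : EReal)}
  have hφ'U : MonotoneOn φ' U :=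
    (ordConnected_setOf_lt_coe a).monotoneOn_of_hasDerivWithinAt_nonneg
      (fun t ht => (hφd2 t ht).hasDerivWithinAt) hφ''nn
  have hφ'C1 : ContDiffOn ℝ 1 φ' U :=
    (hφsm.deriv_of_isOpen (isOpen_setOf_lt_coe a) (by norm_cast)).congr
      fun t ht => (hφd t ht).deriv.symm
  have hsol : IsProfileCurve φ' U (Dom sm) x z θ := ⟨hxpos, hzmem, hdx, hdz, hdθ⟩
  have h0 : (0 : ℝ) ∈ Dom sm := ⟨le_rfl, by simpa using hsm⟩
  have hθ : ∀ s ∈ Dom sm, θ s ∈ Icc (π / 2) π := fun s hs => Ioc_subset_Icc_self <|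
    hsol.angle_mem_Ioc (ordConnected_dom sm) h0 (fun s hs => hs.1)
      (fun t ht => (hφ'pos t ht).le) hθ0 (fun s hs hs0 => hne s hs0 hs.2) hs
  obtain ⟨c, hc, hθc⟩ := hsol.exists_pos_antitoneOn_angle_add_mul (ordConnected_dom sm) hθ h0
    (fun s hs => hs.1) hφ'U (hφ'pos _ (hsol.mem 0 h0))
  obtain ⟨r, hr, rfl⟩ := exists_eq_ofReal_of_dom_bddAbove hsm (T := π / (2 * c)) fun s hs => by
    have hθs : θ s + c * s ≤ θ 0 + c * 0 := hθc h0 hs hs.1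
    rw [le_div_iff₀ (by positivity)]
    linarith [(hθ s hs).1]
  rw [dom_ofReal] at hsol hθ hθc
  obtain ⟨p, hp₁, hp₂, hp⟩ := hsol.exists_tendsto_nhdsLT hr (fun t ht => (hφ'pos t ht).le) hθ hc hθc
  obtain ⟨b, hrb, x', z', θ', hx', hz', hθ', hsol'⟩ :=
    hsol.exists_extension hr (isOpen_setOf_lt_coe a) hφ'C1 hp₁
      ((hsol.mem 0 ⟨le_rfl, hr⟩).trans_le (EReal.coe_le_coe_iff.2 hp₂)) hp
  have h0r : (0 : ℝ) ∈ Ico 0 r := ⟨le_rfl, hr⟩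
  refine hmax (ENNReal.ofReal b) ((ENNReal.ofReal_lt_ofReal_iff (hr.trans hrb)).2 hrb)
    ⟨x', z', θ', (hx' h0r).trans hx0, (hz' h0r).trans hz0, (hθ' h0r).trans hθ0, ?_⟩
  rw [dom_ofReal]
  exact ⟨hsol'.pos, hsol'.mem, hsol'.hasDerivWithinAt_x, hsol'.hasDerivWithinAt_z,
    hsol'.hasDerivWithinAt_θ⟩
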